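/- Let M and N be matroids with finite disjoint ground sets S and T, let L be the free product M □ N, and let U ⊆ S ∪ T with |U| = |S|. Suppose every element of V ∩ S is an isthmus (coloop) of M, where V = (S ∪ T) \ U, and let f : V ∩ S → U ∩ T be any bijection. Let φ₂ : V → T be the bijection that is the identity on V ∩ T and equals f on V ∩ S. Then φ₂ is a weak map from L/U to N: for every subset E ⊆ T independent in N, the set φ₂⁻¹(E) is independent in the contraction L/U. -/

import Mathlib

open Set Matroid

/-- The rank of a set `X` in a matroid `M`: the maximum cardinality of an
independent subset of `X`.  For `X = M.E` this is the rank of `M`. -/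
noncomputable def mrk {α : Type*} (M : Matroid α) (X : Set α) : ℕ :=
  sSup (Set.ncard '' {I | M.Indep I ∧ I ⊆ X})

/-- The contraction `L / C`, defined as the dual of the deletion of `C` from the dual:
`L / C = (L✶ \ C)✶`. -/
noncomputable def mcontract {α : Type*} (L : Matroid α) (C : Set α) : Matroid α :=
  (L✶ ↾ (L.E \ C))✶

/-- A loop of a matroid `N` is an element contained in no independent set of `N`. -/
def IsLoopOf {α : Type*} (N : Matroid α) (e : α) : Prop := ∀ I, N.Indep I → e ∉ I

/-- An isthmus (coloop) of a matroid `M` is an element contained in every basis of `M`. -/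
def IsIsthmusOf {α : Type*} (M : Matroid α) (e : α) : Prop := ∀ B, M.IsBase B → e ∈ B

/-! Extend `U ∩ T`, which is independent in `L` because it is no larger than the set `V ∩ S` of
coloops of `M`, to a basis `J` of `U`; then `φ₂⁻¹(E)` is independent in `L / U` as soon as
`φ₂⁻¹(E) ∪ J` is independent in `L`. The `S`-part of that set lies in the `M`-independent set
`(J ∩ S) ∪ (V ∩ S)` and misses the set `D` of elements of `V ∩ S` that `f` sends outside `E`,
so its rank-lack is at least `|D|`. Its `T`-part lies in `E ∪ (U ∩ T)`, so its nullity is at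
most `|(U ∩ T) \ E| = |f(D)| = |D|`. -/

namespace Matroid

variable {α : Type*}

theorem mcontract_eq_contract (L : Matroid α) (C : Set α) : mcontract L C = L ／ C := rfl

theorem isColoop_of_isIsthmusOf {M : Matroid α} {e : α} (he : IsIsthmusOf M e) :
    M.IsColoop e :=
  isColoop_iff_forall_mem_isBase.2 fun B hB => he B hB

theorem Indep.ncard_le_mrk {M : Matroid α} (hE : M.E.Finite) {I X : Set α}
    (hI : M.Indep I) (hIX : I ⊆ X) : I.ncard ≤ mrk M X := by
  refine le_csSup ⟨M.E.ncard, ?_⟩ ⟨I, ⟨hI, hIX⟩, rfl⟩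
  rintro n ⟨J, ⟨hJ, -⟩, rfl⟩
  exact ncard_le_ncard hJ.subset_ground hE

theorem Indep.mrk_eq_ncard {M : Matroid α} (hE : M.E.Finite) {I : Set α}
    (hI : M.Indep I) : mrk M I = I.ncard := by
  refine le_antisymm (csSup_le ⟨I.ncard, I, ⟨hI, subset_rfl⟩, rfl⟩ ?_)
    (hI.ncard_le_mrk hE subset_rfl)
  rintro n ⟨J, ⟨hJ, hJI⟩, rfl⟩
  exact ncard_le_ncard hJI (hE.subset hI.subset_ground)

end Matroid

section FreeProduct

variable {α : Type*}

def IsFreeProduct (L M N : Matroid α) : Prop :=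
  ∀ A, L.Indep A ↔ A ⊆ M.E ∪ N.E ∧ M.Indep (A ∩ M.E) ∧
    (A ∩ N.E).ncard - mrk N (A ∩ N.E) ≤ mrk M M.E - mrk M (A ∩ M.E)

namespace IsFreeProduct

variable {L M N : Matroid α}

theorem subset_ground_union {A : Set α} (hL : IsFreeProduct L M N) (hA : L.Indep A) :
    A ⊆ M.E ∪ N.E :=
  ((hL A).1 hA).1

theorem indep_inter_left {A : Set α} (hL : IsFreeProduct L M N) (hA : L.Indep A) :
    M.Indep (A ∩ M.E) :=
  ((hL A).1 hA).2.1

theorem indep_of_ncard_diff_le (hL : IsFreeProduct L M N) (hM : M.E.Finite) (hN : N.E.Finite)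
    {A K E : Set α} (hA : A ⊆ M.E ∪ N.E) (hK : M.Indep K) (hAK : A ∩ M.E ⊆ K)
    (hE : N.Indep E) (hEA : E ⊆ A) (hcard : ((A ∩ N.E) \ E).ncard ≤ (K \ A).ncard) :
    L.Indep A := by
  have hAM : M.Indep (A ∩ M.E) := hK.subset hAK
  have hnullity : (A ∩ N.E).ncard - mrk N (A ∩ N.E) ≤ ((A ∩ N.E) \ E).ncard := by
    have hEAN : E ⊆ A ∩ N.E := subset_inter hEA hE.subset_ground
    have := hE.ncard_le_mrk hN hEAN
    have := ncard_sdiff_add_ncard_of_subset hEAN (hN.subset inter_subset_right)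
    omega
  have hlack : (K \ A).ncard ≤ mrk M M.E - mrk M (A ∩ M.E) := by
    have hKA : K \ A = K \ (A ∩ M.E) := by
      rw [sdiff_inter, sdiff_eq_empty.2 hK.subset_ground, union_empty]
    have := hK.ncard_le_mrk hM hK.subset_ground
    have := ncard_sdiff_add_ncard_of_subset hAK (hM.subset hK.subset_ground)
    rw [hAM.mrk_eq_ncard hM, hKA]
    omega
  exact (hL A).2 ⟨hA, hAM, by omega⟩

theorem indep_union_of_bijOn (hL : IsFreeProduct L M N) (hM : M.E.Finite) (hN : N.E.Finite)
    (hMN : Disjoint M.E N.E) {U J W E : Set α} {f : α → α} (hJ : L.Indep J) (hJU : J ⊆ U)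
    (hUJ : U ∩ N.E ⊆ J) (hW : W ⊆ M.coloops) (hWU : Disjoint W U)
    (hf : BijOn f W (U ∩ N.E)) (hE : N.Indep E) :
    L.Indep ((E \ U) ∪ (W ∩ f ⁻¹' E) ∪ J) := by
  set A := (E \ U) ∪ (W ∩ f ⁻¹' E) ∪ J
  have hEN : E ⊆ N.E := hE.subset_ground
  have hWM : W ⊆ M.E := hW.trans M.coloops_subset_ground
  have hK : M.Indep ((J ∩ M.E) ∪ W) :=
    (union_indep_iff_indep_of_subset_coloops hW).2 (hL.indep_inter_left hJ)
  refine hL.indep_of_ncard_diff_le hM hN ?_ hK ?_ hE ?_ ?_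
  · exact union_subset (union_subset (sdiff_subset.trans (hEN.trans subset_union_right))
      (inter_subset_left.trans (hWM.trans subset_union_left))) (hL.subset_ground_union hJ)
  · rintro x ⟨(⟨hxE, -⟩ | ⟨hxW, -⟩) | hxJ, hxM⟩
    · exact absurd (hEN hxE) (hMN.notMem_of_mem_left hxM)
    · exact Or.inr hxW
    · exact Or.inl ⟨hxJ, hxM⟩
  · intro x hxE
    by_cases hxU : x ∈ U
    · exact Or.inr (hUJ ⟨hxU, hEN hxE⟩)
    · exact Or.inl (Or.inl ⟨hxE, hxU⟩)
  calc ((A ∩ N.E) \ E).ncard ≤ ((U ∩ N.E) \ E).ncard := by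
        refine ncard_le_ncard ?_ (hN.subset (sdiff_subset.trans inter_subset_right))
        rintro x ⟨⟨(⟨hxE, -⟩ | ⟨hxW, -⟩) | hxJ, hxN⟩, hxE'⟩
        · exact absurd hxE hxE'
        · exact absurd hxN (hMN.notMem_of_mem_left (hWM hxW))
        · exact ⟨⟨hJU hxJ, hxN⟩, hxE'⟩
    _ = (W \ f ⁻¹' E).ncard := by
        rw [← hf.image_eq, ← image_sdiff_preimage, (hf.injOn.mono sdiff_subset).ncard_image]
    _ ≤ (((J ∩ M.E) ∪ W) \ A).ncard := by
        refine ncard_le_ncard ?_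
          (hM.subset (sdiff_subset.trans (union_subset inter_subset_right hWM)))
        rintro x ⟨hxW, hxE⟩
        refine ⟨Or.inr hxW, ?_⟩
        rintro ((⟨hxE', -⟩ | ⟨-, hxE'⟩) | hxJ)
        · exact hMN.notMem_of_mem_left (hWM hxW) (hEN hxE')
        · exact hxE hxE'
        · exact hWU.notMem_of_mem_left hxW (hJU hxJ)

end IsFreeProduct

end FreeProduct

theorem stmt_11_general {α : Type*} (M N : Matroid α) (S T : Set α)
    (hS : S.Finite) (hT : T.Finite) (hMS : M.E = S) (hNT : N.E = T)
    (hST : Disjoint S T)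
    (L : Matroid α)
    (hLI : ∀ A : Set α, L.Indep A ↔ A ⊆ S ∪ T ∧ M.Indep (A ∩ S) ∧
      (A ∩ T).ncard - mrk N (A ∩ T) ≤ mrk M S - mrk M (A ∩ S))
    (U : Set α)
    (hVS : ∀ e ∈ ((S ∪ T) \ U) ∩ S, IsIsthmusOf M e)
    (f : α → α) (hf : Set.BijOn f (((S ∪ T) \ U) ∩ S) (U ∩ T)) :
    ∀ E ⊆ T, N.Indep E →
      (mcontract L U).Indep ((E \ U) ∪ ((((S ∪ T) \ U) ∩ S) ∩ f ⁻¹' E)) := by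
  subst hMS hNT
  rintro E - hE
  have hL : IsFreeProduct L M N := hLI
  set W := ((M.E ∪ N.E) \ U) ∩ M.E
  have hWU : Disjoint W U := disjoint_left.2 fun x hx => hx.1.2
  have hW : W ⊆ M.coloops := fun e he => isColoop_of_isIsthmusOf (hVS e he)
  have hUN : L.Indep (U ∩ N.E) := by
    refine hL.indep_of_ncard_diff_le hS hT (inter_subset_right.trans subset_union_right)
      (M.coloops_indep.subset hW) ?_ N.empty_indep (empty_subset _) ?_
    · rintro x ⟨⟨-, hxN⟩, hxM⟩
      exact absurd hxN (hST.notMem_of_mem_left hxM)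
    · rw [sdiff_empty, inter_eq_left.2 inter_subset_right,
        (hWU.mono_right inter_subset_left).sdiff_eq_left, ← hf.image_eq, hf.injOn.ncard_image]
  obtain ⟨J, hJ, hUJ⟩ := hUN.subset_isBasis'_of_subset inter_subset_left
  rw [mcontract_eq_contract, hJ.contract_indep_iff]
  exact ⟨hL.indep_union_of_bijOn hS hT hST hJ.indep hJ.subset hUJ hW hWU hf hE,
    disjoint_union_right.2 ⟨disjoint_sdiff_right, (hWU.mono_left inter_subset_left).symm⟩⟩

/-- Let `L = M □ N`, `U ⊆ S ∪ T` with `|U| = |S|`, suppose every element of `V ∩ S` is an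
isthmus of `M`, where `V = (S ∪ T) \ U`, and let `f : V ∩ S → U ∩ T` be a bijection.
Then the bijection `φ₂ : V → T` which is the identity on `V ∩ T` and `f` on `V ∩ S` is a
weak map from `L/U` to `N`: for every `E ⊆ T` independent in `N`, the set
`φ₂⁻¹(E) = (E \ U) ∪ ((V ∩ S) ∩ f⁻¹(E))` is independent in `L/U`. -/
theorem stmt_11 {α : Type*} (M N : Matroid α) (S T : Set α)
    (hS : S.Finite) (hT : T.Finite) (hMS : M.E = S) (hNT : N.E = T)
    (hST : Disjoint S T)
    (L : Matroid α) (hLE : L.E = S ∪ T)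
    (hLI : ∀ A : Set α, L.Indep A ↔ A ⊆ S ∪ T ∧ M.Indep (A ∩ S) ∧
      (A ∩ T).ncard - mrk N (A ∩ T) ≤ mrk M S - mrk M (A ∩ S))
    (U : Set α) (hU : U ⊆ S ∪ T) (hUcard : U.ncard = S.ncard)
    (hVS : ∀ e ∈ ((S ∪ T) \ U) ∩ S, IsIsthmusOf M e)
    (f : α → α) (hf : Set.BijOn f (((S ∪ T) \ U) ∩ S) (U ∩ T)) :
    ∀ E ⊆ T, N.Indep E →
      (mcontract L U).Indep ((E \ U) ∪ ((((S ∪ T) \ U) ∩ S) ∩ f ⁻¹' E)) :=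
  stmt_11_general M N S T hS hT hMS hNT hST L hLI U hVS f hf
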